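/- arXiv:2311.00676 — 3 statements merged into one kernel-verified Lean document; each statement's English description precedes it below -/
import Mathlib

section
/- If the matrix game given by A has a strict Nash equilibrium (x*, y*), then there exists a constant c > 0 such that for every (x, y) ∈ Δ^{d1} × Δ^{d2}, xᵀAy* − (x*)ᵀAy ≥ c·‖(x,y) − (x*,y*)‖², where ‖·‖ is the Euclidean norm. -/
open scoped BigOperators RealInnerProductSpace
open Filter Topology

noncomputable section

abbrev Vec (d : ℕ) := EuclideanSpace ℝ (Fin d)
abbrev Joint (d1 d2 : ℕ) := EuclideanSpace ℝ (Fin d1 ⊕ Fin d2)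

/-- First block of a joint vector. -/
def xPart {d1 d2 : ℕ} (z : Joint d1 d2) : Vec d1 := WithLp.toLp 2 (fun i => z (Sum.inl i))

/-- Second block of a joint vector. -/
def yPart {d1 d2 : ℕ} (z : Joint d1 d2) : Vec d2 := WithLp.toLp 2 (fun j => z (Sum.inr j))

/-- Assemble a joint vector from its two blocks. -/
def joinPt {d1 d2 : ℕ} (x : Vec d1) (y : Vec d2) : Joint d1 d2 :=
  WithLp.toLp 2 (fun s => Sum.elim (fun i => x i) (fun j => y j) s)

/-- The probability simplex Δ^d. -/
def simplexSet (d : ℕ) : Set (Vec d) := {x | (∀ i, 0 ≤ x i) ∧ ∑ i, x i = 1}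

/-- The clipped positive orthant Δ^d_≥. -/
def clippedSet (d : ℕ) : Set (Vec d) := {u | (∀ i, 0 ≤ u i) ∧ 1 ≤ ∑ i, u i}

/-- Z = Δ^{d1} × Δ^{d2}, as a subset of the joint Euclidean space. -/
def Zset (d1 d2 : ℕ) : Set (Joint d1 d2) :=
  {z | xPart z ∈ simplexSet d1 ∧ yPart z ∈ simplexSet d2}

/-- Z_≥ = Δ^{d1}_≥ × Δ^{d2}_≥. -/
def ZgeSet (d1 d2 : ℕ) : Set (Joint d1 d2) :=
  {z | xPart z ∈ clippedSet d1 ∧ yPart z ∈ clippedSet d2}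

/-- Bilinear payoff xᵀ A y. -/
def payoff {d1 d2 : ℕ} (A : Matrix (Fin d1) (Fin d2) ℝ) (x : Vec d1) (y : Vec d2) : ℝ :=
  ∑ i, ∑ j, x i * A i j * y j

/-- Duality gap of a pair of strategies. -/
def dualGap {d1 d2 : ℕ} (A : Matrix (Fin d1) (Fin d2) ℝ) (x : Vec d1) (y : Vec d2) : ℝ :=
  sSup ((fun y' => payoff A x y') '' simplexSet d2) -
    sInf ((fun x' => payoff A x' y) '' simplexSet d1)

/-- Nash equilibrium: a feasible pair with zero duality gap. -/
def IsNash {d1 d2 : ℕ} (A : Matrix (Fin d1) (Fin d2) ℝ) (x : Vec d1) (y : Vec d2) : Prop :=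
  x ∈ simplexSet d1 ∧ y ∈ simplexSet d2 ∧ dualGap A x y = 0

/-- Strict Nash equilibrium: unique best responses on both sides. -/
def IsStrictNash {d1 d2 : ℕ} (A : Matrix (Fin d1) (Fin d2) ℝ)
    (xs : Vec d1) (ys : Vec d2) : Prop :=
  IsNash A xs ys ∧
  (∀ x ∈ simplexSet d1, x ≠ xs → payoff A xs ys < payoff A x ys) ∧
  (∀ y ∈ simplexSet d2, y ≠ ys → payoff A xs y < payoff A xs ys)

/-- ℓ₁ normalization of a block. -/
def normPart {d : ℕ} (u : Vec d) : Vec d := (∑ i, |u i|)⁻¹ • u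

/-- ℓ₁ normalization with the convention 0/0 = (1/d)·1. -/
def normPart0 {d : ℕ} (u : Vec d) : Vec d :=
  if (∑ i, |u i|) = 0 then WithLp.toLp 2 (fun _ => (d : ℝ)⁻¹) else (∑ i, |u i|)⁻¹ • u

/-- The normalization operator g. -/
def gNorm {d1 d2 : ℕ} (z : Joint d1 d2) : Joint d1 d2 :=
  joinPt (normPart (xPart z)) (normPart (yPart z))

/-- The regret operator F. -/
def Fop {d1 d2 : ℕ} (A : Matrix (Fin d1) (Fin d2) ℝ) (z : Joint d1 d2) : Joint d1 d2 :=
  joinPt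
    (WithLp.toLp 2 (fun i => (∑ j, A i j * normPart (yPart z) j) -
      payoff A (normPart (xPart z)) (normPart (yPart z))))
    (WithLp.toLp 2 (fun j => -(∑ i, A i j * normPart (xPart z) i) +
      payoff A (normPart (xPart z)) (normPart (yPart z))))

/-- Spectral (ℓ₂ operator) norm of a matrix. -/
def opNorm {d1 d2 : ℕ} (A : Matrix (Fin d1) (Fin d2) ℝ) : ℝ :=
  ‖LinearMap.toContinuousLinearMap (Matrix.toEuclideanLin A)‖

/-- Lipschitz constant L_F = √6 ‖A‖_op max{d1,d2}. -/
def LF {d1 d2 : ℕ} (A : Matrix (Fin d1) (Fin d2) ℝ) : ℝ :=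
  Real.sqrt 6 * opNorm A * max (d1 : ℝ) (d2 : ℝ)

open Classical in
/-- Euclidean (metric) projection onto a set: the distance minimizer, when it exists. -/
def projOn {E : Type*} [NormedAddCommGroup E] [InnerProductSpace ℝ E]
    (S : Set E) (u : E) : E :=
  if h : ∃ p ∈ S, ∀ q ∈ S, ‖u - p‖ ≤ ‖u - q‖ then h.choose else u

/-- The set of Nash equilibria, in the joint space. -/
def nashSet {d1 d2 : ℕ} (A : Matrix (Fin d1) (Fin d2) ℝ) : Set (Joint d1 d2) :=
  {z | IsNash A (xPart z) (yPart z)}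

/-- SOL(Z_≥, F): solutions of the variational inequality. -/
def SolSet {d1 d2 : ℕ} (A : Matrix (Fin d1) (Fin d2) ℝ) : Set (Joint d1 d2) :=
  {z | z ∈ ZgeSet d1 d2 ∧ ∀ z' ∈ ZgeSet d1 d2, ⟪Fop A z, z - z'⟫ ≤ 0}

/-- p is a limit point of the sequence z: limit of a convergent subsequence. -/
def IsLimitPoint {E : Type*} [TopologicalSpace E] (z : ℕ → E) (p : E) : Prop :=
  ∃ φ : ℕ → ℕ, StrictMono φ ∧ Tendsto (z ∘ φ) atTop (𝓝 p)

/-- The ExRM⁺ dynamics: z are the main iterates, zh the half-iterates. -/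
def ExRM {d1 d2 : ℕ} (A : Matrix (Fin d1) (Fin d2) ℝ) (η : ℝ)
    (z zh : ℕ → Joint d1 d2) : Prop :=
  z 0 ∈ Zset d1 d2 ∧
  (∀ t, zh t = projOn (ZgeSet d1 d2) (z t - η • Fop A (z t))) ∧
  (∀ t, z (t + 1) = projOn (ZgeSet d1 d2) (z t - η • Fop A (zh t)))

/-- The SPRM⁺ dynamics (z^{-1} = w^0). -/
def SPRM {d1 d2 : ℕ} (A : Matrix (Fin d1) (Fin d2) ℝ) (η : ℝ)
    (w z : ℕ → Joint d1 d2) : Prop :=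
  w 0 ∈ Zset d1 d2 ∧
  z 0 = projOn (ZgeSet d1 d2) (w 0 - η • Fop A (w 0)) ∧
  (∀ t, z (t + 1) = projOn (ZgeSet d1 d2) (w (t + 1) - η • Fop A (z t))) ∧
  (∀ t, w (t + 1) = projOn (ZgeSet d1 d2) (w t - η • Fop A (z t)))

/-- z^{t-1} with the convention z^{-1} = w^0. -/
def zPrev {d1 d2 : ℕ} (w z : ℕ → Joint d1 d2) : ℕ → Joint d1 d2 :=
  fun t => if t = 0 then w 0 else z (t - 1)


/-- Standard basis vector in `Vec d`. -/
def bvec {d : ℕ} (i : Fin d) : Vec d := WithLp.toLp 2 (fun k => if k = i then 1 else 0)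

lemma bvec_apply {d : ℕ} (i k : Fin d) : bvec i k = if k = i then 1 else 0 := rfl

lemma bvec_mem {d : ℕ} (i : Fin d) : bvec i ∈ simplexSet d := by
  refine ⟨fun k => ?_, by simp [bvec]⟩
  rw [bvec_apply]; split <;> norm_num

lemma bvec_inj {d : ℕ} {i i' : Fin d} (h : bvec i = bvec i') : i = i' := by
  by_contra hne
  have := congrArg (fun v : Vec d => v i) h
  simp [bvec, hne] at this

lemma payoff_rows {d1 d2 : ℕ} (A : Matrix (Fin d1) (Fin d2) ℝ) (x : Vec d1) (y : Vec d2) :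
    payoff A x y = ∑ i, x i * ∑ j, A i j * y j := by
  simp [payoff, Finset.mul_sum, mul_assoc]

lemma payoff_cols {d1 d2 : ℕ} (A : Matrix (Fin d1) (Fin d2) ℝ) (x : Vec d1) (y : Vec d2) :
    payoff A x y = ∑ j, y j * ∑ i, x i * A i j := by
  rw [payoff, Finset.sum_comm]
  refine Finset.sum_congr rfl fun j _ => ?_
  rw [Finset.mul_sum]
  exact Finset.sum_congr rfl fun i _ => by ring

lemma payoff_bvec_left {d1 d2 : ℕ} (A : Matrix (Fin d1) (Fin d2) ℝ) (i : Fin d1) (y : Vec d2) :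
    payoff A (bvec i) y = ∑ j, A i j * y j := by
  rw [payoff_rows]
  simp [bvec, ite_mul]

lemma payoff_bvec_right {d1 d2 : ℕ} (A : Matrix (Fin d1) (Fin d2) ℝ) (x : Vec d1) (j : Fin d2) :
    payoff A x (bvec j) = ∑ i, x i * A i j := by
  rw [payoff_cols]
  simp [bvec, ite_mul]

set_option maxHeartbeats 1000000 in
/-- With a strict Nash equilibrium (x*, y*), there is c > 0 such that
xᵀAy* − (x*)ᵀAy ≥ c‖(x,y) − (x*,y*)‖² on Δ^{d1} × Δ^{d2}. -/
theorem strict_NE_gap_to_distance {d1 d2 : ℕ} (hd1 : 1 ≤ d1) (hd2 : 1 ≤ d2)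
    (A : Matrix (Fin d1) (Fin d2) ℝ) (xs : Vec d1) (ys : Vec d2)
    (hstrict : IsStrictNash A xs ys) :
    ∃ c > (0 : ℝ), ∀ x ∈ simplexSet d1, ∀ y ∈ simplexSet d2,
      payoff A x ys - payoff A xs y ≥ c * (‖x - xs‖ ^ 2 + ‖y - ys‖ ^ 2) := by
  classical
  obtain ⟨⟨hxs, hys, -⟩, hX, hY⟩ := hstrict
  set v := payoff A xs ys with hv
  -- xs is a vertex
  have hex : ∃ i, xs = bvec i := by
    by_contra h
    push_neg at h
    have hlt : ∀ i, v < payoff A (bvec i) ys := fun i =>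
      hX (bvec i) (bvec_mem i) (fun he => h i he.symm)
    have h1 : v = ∑ i, xs i * payoff A (bvec i) ys := by
      simp only [payoff_bvec_left]; rw [hv, payoff_rows]
    have h2 : ∃ i, 0 < xs i := by
      by_contra h2; push_neg at h2
      have hz : ∑ i, xs i = 0 :=
        Finset.sum_eq_zero fun i _ => le_antisymm (h2 i) (hxs.1 i)
      rw [hxs.2] at hz; norm_num at hz
    obtain ⟨i0, hi0⟩ := h2
    have hlt2 : ∑ i, xs i * v < ∑ i, xs i * payoff A (bvec i) ys := by
      apply Finset.sum_lt_sum
      · intro i _; exact mul_le_mul_of_nonneg_left (hlt i).le (hxs.1 i)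
      · exact ⟨i0, Finset.mem_univ _, mul_lt_mul_of_pos_left (hlt i0) hi0⟩
    rw [← Finset.sum_mul, hxs.2, one_mul, ← h1] at hlt2
    exact lt_irrefl _ hlt2
  -- ys is a vertex
  have hey : ∃ j, ys = bvec j := by
    by_contra h
    push_neg at h
    have hlt : ∀ j, payoff A xs (bvec j) < v := fun j =>
      hY (bvec j) (bvec_mem j) (fun he => h j he.symm)
    have h1 : v = ∑ j, ys j * payoff A xs (bvec j) := by
      simp only [payoff_bvec_right]; rw [hv, payoff_cols]
    have h2 : ∃ j, 0 < ys j := by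
      by_contra h2; push_neg at h2
      have hz : ∑ j, ys j = 0 :=
        Finset.sum_eq_zero fun j _ => le_antisymm (h2 j) (hys.1 j)
      rw [hys.2] at hz; norm_num at hz
    obtain ⟨j0, hj0⟩ := h2
    have hlt2 : ∑ j, ys j * payoff A xs (bvec j) < ∑ j, ys j * v := by
      apply Finset.sum_lt_sum
      · intro j _; exact mul_le_mul_of_nonneg_left (hlt j).le (hys.1 j)
      · exact ⟨j0, Finset.mem_univ _, mul_lt_mul_of_pos_left (hlt j0) hj0⟩
    rw [← Finset.sum_mul, hys.2, one_mul, ← h1] at hlt2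
    exact lt_irrefl _ hlt2
  obtain ⟨istar, hxe⟩ := hex
  obtain ⟨jstar, hye⟩ := hey
  set a : Fin d1 → ℝ := fun i => payoff A (bvec i) ys - v with ha
  set b : Fin d2 → ℝ := fun j => v - payoff A xs (bvec j) with hb
  have hai : ∀ i, i ≠ istar → 0 < a i := by
    intro i hi
    have hne : bvec i ≠ xs := by rw [hxe]; exact fun h => hi (bvec_inj h)
    have := hX (bvec i) (bvec_mem i) hne
    simp only [ha]; rw [← hv] at *; linarith
  have hbj : ∀ j, j ≠ jstar → 0 < b j := by
    intro j hj
    have hne : bvec j ≠ ys := by rw [hye]; exact fun h => hj (bvec_inj h)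
    have := hY (bvec j) (bvec_mem j) hne
    simp only [hb]; rw [← hv] at *; linarith
  have hastar : a istar = 0 := by simp only [ha]; rw [← hxe, ← hv]; ring
  have hbstar : b jstar = 0 := by simp only [hb]; rw [← hye, ← hv]; ring
  -- the positive margin
  set S : Finset ℝ :=
    insert 1 (((Finset.univ.erase istar).image a) ∪ ((Finset.univ.erase jstar).image b))
    with hS
  have hSne : S.Nonempty := Finset.insert_nonempty _ _
  set α := S.min' hSne with hα
  have hαpos : 0 < α := by
    rw [hα]
    refine (Finset.lt_min'_iff _ _).2 fun t ht => ?_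
    rw [hS] at ht
    rcases Finset.mem_insert.1 ht with h | h
    · rw [h]; norm_num
    · rcases Finset.mem_union.1 h with h | h
      · obtain ⟨i, hi, rfl⟩ := Finset.mem_image.1 h
        exact hai i (Finset.ne_of_mem_erase hi)
      · obtain ⟨j, hj, rfl⟩ := Finset.mem_image.1 h
        exact hbj j (Finset.ne_of_mem_erase hj)
  have hαa : ∀ i ∈ Finset.univ.erase istar, α ≤ a i := fun i hi =>
    Finset.min'_le _ _ (by
      rw [hS]
      exact Finset.mem_insert_of_mem
        (Finset.mem_union_left _ (Finset.mem_image_of_mem a hi)))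
  have hαb : ∀ j ∈ Finset.univ.erase jstar, α ≤ b j := fun j hj =>
    Finset.min'_le _ _ (by
      rw [hS]
      exact Finset.mem_insert_of_mem
        (Finset.mem_union_right _ (Finset.mem_image_of_mem b hj)))
  refine ⟨α / 2, by linarith, ?_⟩
  intro x hx y hy
  set Sx := ∑ i ∈ Finset.univ.erase istar, x i with hSx
  set Sy := ∑ j ∈ Finset.univ.erase jstar, y j with hSy
  have hSx0 : 0 ≤ Sx := Finset.sum_nonneg fun i _ => hx.1 i
  have hSy0 : 0 ≤ Sy := Finset.sum_nonneg fun j _ => hy.1 j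
  have hSx1 : Sx + x istar = 1 := by
    rw [hSx, Finset.sum_erase_add _ _ (Finset.mem_univ istar), hx.2]
  have hSy1 : Sy + y jstar = 1 := by
    rw [hSy, Finset.sum_erase_add _ _ (Finset.mem_univ jstar), hy.2]
  have hxk1 : ∀ k, x k ≤ 1 := fun k => by
    rw [← hx.2]; exact Finset.single_le_sum (fun i _ => hx.1 i) (Finset.mem_univ k)
  have hyk1 : ∀ k, y k ≤ 1 := fun k => by
    rw [← hy.2]; exact Finset.single_le_sum (fun j _ => hy.1 j) (Finset.mem_univ k)
  -- gap identities
  have hgap1 : payoff A x ys - v = ∑ i, x i * a i := by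
    have h1 : ∑ i, x i * a i = (∑ i, x i * payoff A (bvec i) ys) - (∑ i, x i) * v := by
      rw [Finset.sum_mul, ← Finset.sum_sub_distrib]
      exact Finset.sum_congr rfl fun i _ => by simp only [ha]; ring
    rw [h1, hx.2, one_mul]
    simp only [payoff_bvec_left]
    rw [payoff_rows]
  have hgap2 : v - payoff A xs y = ∑ j, y j * b j := by
    have h1 : ∑ j, y j * b j = (∑ j, y j) * v - (∑ j, y j * payoff A xs (bvec j)) := by
      rw [Finset.sum_mul, ← Finset.sum_sub_distrib]
      exact Finset.sum_congr rfl fun j _ => by simp only [hb]; ring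
    rw [h1, hy.2, one_mul]
    simp only [payoff_bvec_right]
    rw [payoff_cols]
  have hgap1' : payoff A x ys - v = ∑ i ∈ Finset.univ.erase istar, x i * a i := by
    rw [hgap1, ← Finset.sum_erase_add _ _ (Finset.mem_univ istar), hastar,
      mul_zero, add_zero]
  have hgap2' : v - payoff A xs y = ∑ j ∈ Finset.univ.erase jstar, y j * b j := by
    rw [hgap2, ← Finset.sum_erase_add _ _ (Finset.mem_univ jstar), hbstar,
      mul_zero, add_zero]
  -- lower bounds by α
  have hlb1 : α * Sx ≤ ∑ i ∈ Finset.univ.erase istar, x i * a i := by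
    rw [hSx, Finset.mul_sum]
    refine Finset.sum_le_sum fun i hi => ?_
    rw [mul_comm α]
    exact mul_le_mul_of_nonneg_left (hαa i hi) (hx.1 i)
  have hlb2 : α * Sy ≤ ∑ j ∈ Finset.univ.erase jstar, y j * b j := by
    rw [hSy, Finset.mul_sum]
    refine Finset.sum_le_sum fun j hj => ?_
    rw [mul_comm α]
    exact mul_le_mul_of_nonneg_left (hαb j hj) (hy.1 j)
  -- squared-norm bounds
  have hnx2 : ‖x - xs‖ ^ 2 ≤ 2 * Sx := by
    have hnx : ‖x - xs‖ ^ 2 = ∑ k, (x k - xs k) ^ 2 := by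
      rw [EuclideanSpace.norm_eq, Real.sq_sqrt (by positivity)]
      exact Finset.sum_congr rfl fun k _ => by
        simp [Real.norm_eq_abs, sq_abs]
    rw [hnx, ← Finset.sum_erase_add _ _ (Finset.mem_univ istar)]
    have h1 : ∀ k ∈ Finset.univ.erase istar, (x k - xs k) ^ 2 = x k ^ 2 := by
      intro k hk
      have hk0 : xs k = 0 := by
        rw [hxe, bvec_apply, if_neg (Finset.ne_of_mem_erase hk)]
      rw [hk0, sub_zero]
    have h2 : xs istar = 1 := by rw [hxe, bvec_apply, if_pos rfl]
    rw [Finset.sum_congr rfl h1, h2]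
    have h3 : ∑ k ∈ Finset.univ.erase istar, x k ^ 2 ≤ Sx := by
      rw [hSx]
      refine Finset.sum_le_sum fun k _ => ?_
      nlinarith [hx.1 k, hxk1 k]
    have h4 : (x istar - 1) ^ 2 = Sx ^ 2 := by
      have : x istar - 1 = -Sx := by linarith
      rw [this]; ring
    have h5 : Sx ≤ 1 := by nlinarith [hx.1 istar]
    nlinarith
  have hny2 : ‖y - ys‖ ^ 2 ≤ 2 * Sy := by
    have hny : ‖y - ys‖ ^ 2 = ∑ k, (y k - ys k) ^ 2 := by
      rw [EuclideanSpace.norm_eq, Real.sq_sqrt (by positivity)]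
      exact Finset.sum_congr rfl fun k _ => by
        simp [Real.norm_eq_abs, sq_abs]
    rw [hny, ← Finset.sum_erase_add _ _ (Finset.mem_univ jstar)]
    have h1 : ∀ k ∈ Finset.univ.erase jstar, (y k - ys k) ^ 2 = y k ^ 2 := by
      intro k hk
      have hk0 : ys k = 0 := by
        rw [hye, bvec_apply, if_neg (Finset.ne_of_mem_erase hk)]
      rw [hk0, sub_zero]
    have h2 : ys jstar = 1 := by rw [hye, bvec_apply, if_pos rfl]
    rw [Finset.sum_congr rfl h1, h2]
    have h3 : ∑ k ∈ Finset.univ.erase jstar, y k ^ 2 ≤ Sy := by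
      rw [hSy]
      refine Finset.sum_le_sum fun k _ => ?_
      nlinarith [hy.1 k, hyk1 k]
    have h4 : (y jstar - 1) ^ 2 = Sy ^ 2 := by
      have : y jstar - 1 = -Sy := by linarith
      rw [this]; ring
    have h5 : Sy ≤ 1 := by nlinarith [hy.1 jstar]
    nlinarith
  have key : payoff A x ys - payoff A xs y
      = (payoff A x ys - v) + (v - payoff A xs y) := by ring
  rw [ge_iff_le, key, hgap1', hgap2']
  nlinarith [hlb1, hlb2, mul_le_mul_of_nonneg_left hnx2 hαpos.le,
    mul_le_mul_of_nonneg_left hny2 hαpos.le]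

end
end

section
/- For any Nash equilibrium z* = (x*, y*) ∈ Z of the matrix game given by A, any real a ≥ 1, and any z ∈ Z_≥, it holds that ⟨F(z), z − a·z*⟩ ≥ 0. -/
open scoped BigOperators RealInnerProductSpace
open Filter Topology

noncomputable section

lemma normPart_mem_simplex {d : ℕ} {u : Vec d} (hu : u ∈ clippedSet d) :
    normPart u ∈ simplexSet d := by
  obtain ⟨hpos, hsum⟩ := hu
  have habs : ∑ i, |u i| = ∑ i, u i :=
    Finset.sum_congr rfl (fun i _ => abs_of_nonneg (hpos i))
  have hs : (0:ℝ) < ∑ i, |u i| := by rw [habs]; linarith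
  constructor
  · intro i
    have h : normPart u i = (∑ i, |u i|)⁻¹ * u i := rfl
    rw [h]
    exact mul_nonneg (inv_nonneg.mpr (le_of_lt hs)) (hpos i)
  · have h : ∑ i, normPart u i = (∑ i, |u i|)⁻¹ * ∑ i, u i := by
      rw [Finset.mul_sum]; rfl
    rw [h, ← habs, inv_mul_cancel₀ hs.ne']

lemma payoff_le_bound {d1 d2 : ℕ} (A : Matrix (Fin d1) (Fin d2) ℝ) (x : Vec d1)
    {y : Vec d2} (hy : y ∈ simplexSet d2) :
    payoff A x y ≤ ∑ i, ∑ j, |x i * A i j| := by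
  obtain ⟨hpos, hsum⟩ := hy
  have hy1 : ∀ j, y j ≤ 1 := by
    intro j
    calc y j ≤ ∑ j, y j := Finset.single_le_sum (fun j _ => hpos j) (Finset.mem_univ j)
    _ = 1 := hsum
  unfold payoff
  refine Finset.sum_le_sum (fun i _ => Finset.sum_le_sum (fun j _ => ?_))
  calc x i * A i j * y j ≤ |x i * A i j| * y j :=
        mul_le_mul_of_nonneg_right (le_abs_self _) (hpos j)
  _ ≤ |x i * A i j| * 1 := mul_le_mul_of_nonneg_left (hy1 j) (abs_nonneg _)
  _ = |x i * A i j| := mul_one _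

lemma bound_le_payoff {d1 d2 : ℕ} (A : Matrix (Fin d1) (Fin d2) ℝ) (y : Vec d2)
    {x : Vec d1} (hx : x ∈ simplexSet d1) :
    -∑ i, ∑ j, |A i j * y j| ≤ payoff A x y := by
  obtain ⟨hpos, hsum⟩ := hx
  have hx1 : ∀ i, x i ≤ 1 := by
    intro i
    calc x i ≤ ∑ i, x i := Finset.single_le_sum (fun i _ => hpos i) (Finset.mem_univ i)
    _ = 1 := hsum
  unfold payoff
  rw [← Finset.sum_neg_distrib]
  refine Finset.sum_le_sum (fun i _ => ?_)
  rw [← Finset.sum_neg_distrib]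
  refine Finset.sum_le_sum (fun j _ => ?_)
  have h1 : -|A i j * y j| ≤ -(x i * |A i j * y j|) := by
    have : x i * |A i j * y j| ≤ 1 * |A i j * y j| :=
      mul_le_mul_of_nonneg_right (hx1 i) (abs_nonneg _)
    simpa using this
  refine h1.trans ?_
  have h3 : x i * (-(|A i j * y j|)) ≤ x i * (A i j * y j) := by
    refine mul_le_mul_of_nonneg_left ?_ (hpos i)
    exact neg_abs_le _
  calc -(x i * |A i j * y j|) = x i * (-(|A i j * y j|)) := by ring
  _ ≤ x i * (A i j * y j) := h3
  _ = x i * A i j * y j := by ring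

/-- The Minty condition: for any Nash equilibrium z* ∈ Z, any a ≥ 1 and
any z ∈ Z_≥, ⟨F(z), z − a z*⟩ ≥ 0. -/
theorem minty_condition {d1 d2 : ℕ} (hd1 : 1 ≤ d1) (hd2 : 1 ≤ d2)
    (A : Matrix (Fin d1) (Fin d2) ℝ) (xs : Vec d1) (ys : Vec d2)
    (hNash : IsNash A xs ys) (a : ℝ) (ha : 1 ≤ a)
    (z : Joint d1 d2) (hz : z ∈ ZgeSet d1 d2) :
    0 ≤ ⟪Fop A z, z - a • joinPt xs ys⟫ := by
  obtain ⟨hxz, hyz⟩ := hz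
  obtain ⟨hxsS, hysS, hgap⟩ := hNash
  set xh := normPart (xPart z) with hxhdef
  set yh := normPart (yPart z) with hyhdef
  have hxhS : xh ∈ simplexSet d1 := normPart_mem_simplex hxz
  have hyhS : yh ∈ simplexSet d2 := normPart_mem_simplex hyz
  -- key Nash inequality
  have hkey : payoff A xs yh ≤ payoff A xh ys := by
    have hub : BddAbove ((fun y' => payoff A xs y') '' simplexSet d2) := by
      refine ⟨∑ i, ∑ j, |xs i * A i j|, ?_⟩
      rintro r ⟨y', hy', rfl⟩
      exact payoff_le_bound A xs hy'
    have hlb : BddBelow ((fun x' => payoff A x' ys) '' simplexSet d1) := by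
      refine ⟨-∑ i, ∑ j, |A i j * ys j|, ?_⟩
      rintro r ⟨x', hx', rfl⟩
      exact bound_le_payoff A ys hx'
    have h1 : payoff A xs yh ≤ sSup ((fun y' => payoff A xs y') '' simplexSet d2) :=
      le_csSup hub ⟨yh, hyhS, rfl⟩
    have h2 : sInf ((fun x' => payoff A x' ys) '' simplexSet d1) ≤ payoff A xh ys :=
      csInf_le hlb ⟨xh, hxhS, rfl⟩
    unfold dualGap at hgap
    linarith
  obtain ⟨hxpos, hxsum⟩ := hxz
  obtain ⟨hypos, hysum⟩ := hyz
  obtain ⟨hxhpos, hxhsum⟩ := hxhS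
  obtain ⟨hyhpos, hyhsum⟩ := hyhS
  obtain ⟨hxspos, hxssum⟩ := hxsS
  obtain ⟨hyspos, hyssum⟩ := hysS
  set sx : ℝ := ∑ i, |xPart z i| with hsxdef
  set sy : ℝ := ∑ j, |yPart z j| with hsydef
  have hxrep : ∀ i, xPart z i = sx * xh i := by
    intro i
    have habs : sx = ∑ i, xPart z i := by
      rw [hsxdef]; exact Finset.sum_congr rfl (fun i _ => abs_of_nonneg (hxpos i))
    have hs : (0:ℝ) < sx := by rw [habs]; linarith
    have h : xh i = sx⁻¹ * xPart z i := rfl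
    rw [h]; field_simp
  have hyrep : ∀ j, yPart z j = sy * yh j := by
    intro j
    have habs : sy = ∑ j, yPart z j := by
      rw [hsydef]; exact Finset.sum_congr rfl (fun j _ => abs_of_nonneg (hypos j))
    have hs : (0:ℝ) < sy := by rw [habs]; linarith
    have h : yh j = sy⁻¹ * yPart z j := rfl
    rw [h]; field_simp
  set v : ℝ := payoff A xh yh with hvdef
  have hv1 : ∑ i, xh i * (∑ j, A i j * yh j) = v := by
    rw [hvdef]; unfold payoff
    refine Finset.sum_congr rfl (fun i _ => ?_)
    rw [Finset.mul_sum]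
    exact Finset.sum_congr rfl (fun j _ => by ring)
  have hv2 : ∑ j, (∑ i, A i j * xh i) * yh j = v := by
    rw [hvdef]; unfold payoff
    rw [Finset.sum_comm]
    refine Finset.sum_congr rfl (fun j _ => ?_)
    rw [Finset.sum_mul]
    exact Finset.sum_congr rfl (fun i _ => by ring)
  have hp1 : ∑ i, xs i * (∑ j, A i j * yh j) = payoff A xs yh := by
    unfold payoff
    refine Finset.sum_congr rfl (fun i _ => ?_)
    rw [Finset.mul_sum]
    exact Finset.sum_congr rfl (fun j _ => by ring)
  have hp2 : ∑ j, (∑ i, A i j * xh i) * ys j = payoff A xh ys := by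
    unfold payoff
    rw [Finset.sum_comm]
    refine Finset.sum_congr rfl (fun j _ => ?_)
    rw [Finset.sum_mul]
    exact Finset.sum_congr rfl (fun i _ => by ring)
  have hIP : ⟪Fop A z, z - a • joinPt xs ys⟫
      = a * (payoff A xh ys - payoff A xs yh) := by
    have hinner : ⟪Fop A z, z - a • joinPt xs ys⟫
        = ∑ s, Fop A z s * ((z s) - a * (joinPt xs ys s)) := by
      simp [PiLp.inner_apply, RCLike.inner_apply, PiLp.sub_apply, PiLp.smul_apply,
        smul_eq_mul]
      congr 1 <;> exact Finset.sum_congr rfl (fun _ _ => mul_comm _ _)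
    rw [hinner, Fintype.sum_sum_type]
    have hFl : ∀ i, Fop A z (Sum.inl i) = (∑ j, A i j * yh j) - v := fun i => by
      simp [Fop, joinPt, hvdef, hyhdef, hxhdef]
    have hFr : ∀ j, Fop A z (Sum.inr j) = -(∑ i, A i j * xh i) + v := fun j => by
      simp [Fop, joinPt, hvdef, hyhdef, hxhdef]
    have hsum1 : ∑ i, Fop A z (Sum.inl i) * ((z (Sum.inl i)) - a * (joinPt xs ys (Sum.inl i)))
        = sx * (v - v * 1) - a * (payoff A xs yh - v * 1) := by
      have : ∀ i, Fop A z (Sum.inl i) * ((z (Sum.inl i)) - a * (joinPt xs ys (Sum.inl i)))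
          = sx * (xh i * (∑ j, A i j * yh j) - v * xh i)
            - a * (xs i * (∑ j, A i j * yh j) - v * xs i) := by
        intro i
        rw [hFl i]
        have hz : z (Sum.inl i) = sx * xh i := hxrep i
        have hj : joinPt xs ys (Sum.inl i) = xs i := rfl
        rw [hz, hj]; ring
      rw [Finset.sum_congr rfl (fun i _ => this i)]
      rw [Finset.sum_sub_distrib, ← Finset.mul_sum, ← Finset.mul_sum,
        Finset.sum_sub_distrib, Finset.sum_sub_distrib, ← Finset.mul_sum,
        ← Finset.mul_sum, hv1, hp1, hxhsum, hxssum]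
    have hsum2 : ∑ j, Fop A z (Sum.inr j) * ((z (Sum.inr j)) - a * (joinPt xs ys (Sum.inr j)))
        = sy * (v * 1 - v) - a * (v * 1 - payoff A xh ys) := by
      have : ∀ j, Fop A z (Sum.inr j) * ((z (Sum.inr j)) - a * (joinPt xs ys (Sum.inr j)))
          = sy * (v * yh j - (∑ i, A i j * xh i) * yh j)
            - a * (v * ys j - (∑ i, A i j * xh i) * ys j) := by
        intro j
        rw [hFr j]
        have hz : z (Sum.inr j) = sy * yh j := hyrep j
        have hj : joinPt xs ys (Sum.inr j) = ys j := rfl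
        rw [hz, hj]; ring
      rw [Finset.sum_congr rfl (fun j _ => this j)]
      rw [Finset.sum_sub_distrib, ← Finset.mul_sum, ← Finset.mul_sum,
        Finset.sum_sub_distrib, Finset.sum_sub_distrib, ← Finset.mul_sum,
        ← Finset.mul_sum, hv2, hp2, hyhsum, hyssum]
    rw [hsum1, hsum2]; ring
  rw [hIP]
  have : 0 ≤ payoff A xh ys - payoff A xs yh := by linarith
  positivity

end
end

section
/- Let z* ∈ Z_≥ be a point such that ⟨F(z), z − z*⟩ ≥ 0 for all z ∈ Z_≥, and let {z^t} and {w^t} be the sequences produced by SPRM+ with stepsize η ∈ (0, 1/(8L_F)]. Then for every t ≥ 0: ‖w^{t+1} − z*‖² + (1/16)·‖w^{t+1} − z^t‖² ≤ ‖w^t − z*‖² + (1/16)·‖w^t − z^{t-1}‖² − (15/16)·(‖w^{t+1} − z^t‖² + ‖w^t − z^t‖²). Consequently, for every t ≥ 0, ‖w^{t+1} − z^t‖ + ‖w^t − z^t‖ ≤ 2·‖w^0 − z*‖ and ‖w^t − z^t‖ + ‖w^t − z^{t-1}‖ ≤ 2·‖w^0 − z*‖. -/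
open scoped BigOperators RealInnerProductSpace
open Filter Topology

noncomputable section

def onesV (d : ℕ) : Vec d := WithLp.toLp 2 (fun _ => (1:ℝ))


lemma norm_sq_vec {d : ℕ} (v : Vec d) : ‖v‖^2 = ∑ i, (v i)^2 := by
  rw [EuclideanSpace.norm_eq, Real.sq_sqrt (by positivity)]
  simp [Real.norm_eq_abs, sq_abs]

lemma single_bound {d : ℕ} (v : Vec d) (i : Fin d) :
    ‖v - (∑ j, v j) • (EuclideanSpace.single i (1:ℝ))‖ ≤ Real.sqrt d * ‖v‖ := by
  have key : ‖v - (∑ j, v j) • (EuclideanSpace.single i (1:ℝ))‖^2 ≤ d * ‖v‖^2 := by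
    rw [norm_sq_vec, norm_sq_vec]
    have hexp : ∀ j, (v - (∑ k, v k) • (EuclideanSpace.single i (1:ℝ))) j
        = v j - (∑ k, v k) * (if j = i then 1 else 0) := by
      intro j
      simp [EuclideanSpace.single_apply]
    simp only [hexp]
    have hT : (∑ j ∈ Finset.univ.erase i, v j) ^ 2 ≤ (d - 1) * ∑ j ∈ Finset.univ.erase i, (v j)^2 := by
      have := sq_sum_le_card_mul_sum_sq (s := Finset.univ.erase i) (f := fun j => v j)
      have hcard : (Finset.univ.erase i).card = d - 1 := by
        simp [Finset.card_erase_of_mem]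
      rw [hcard] at this
      calc (∑ j ∈ Finset.univ.erase i, v j) ^ 2 ≤ ((d-1:ℕ) : ℝ) * ∑ j ∈ Finset.univ.erase i, (v j)^2 := by
            exact_mod_cast this
        _ = (d - 1) * ∑ j ∈ Finset.univ.erase i, (v j)^2 := by
            rw [Nat.cast_sub (Fin.pos i)]
            push_cast
            ring
    have hsplit : ∑ j, (v j - (∑ k, v k) * (if j = i then 1 else 0))^2
        = (∑ j ∈ Finset.univ.erase i, (v j)^2) + (v i - ∑ k, v k)^2 := by
      rw [← Finset.sum_erase_add _ _ (Finset.mem_univ i)]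
      congr 1
      · apply Finset.sum_congr rfl
        intro j hj
        rw [if_neg (Finset.ne_of_mem_erase hj)]
        ring
      · rw [if_pos rfl]
        ring
    rw [hsplit]
    have hvsum : v i - ∑ k, v k = -(∑ j ∈ Finset.univ.erase i, v j) := by
      rw [← Finset.sum_erase_add _ _ (Finset.mem_univ i)]; ring
    rw [hvsum, neg_sq]
    have hrest : ∑ j ∈ Finset.univ.erase i, (v j)^2 ≤ ∑ j, (v j)^2 :=
      Finset.sum_le_sum_of_subset_of_nonneg (Finset.subset_univ _) (fun _ _ _ => sq_nonneg _)
    nlinarith [hrest, hT]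
  calc ‖v - (∑ j, v j) • (EuclideanSpace.single i (1:ℝ))‖
      = Real.sqrt (‖v - (∑ j, v j) • (EuclideanSpace.single i (1:ℝ))‖^2) := by
        rw [Real.sqrt_sq (norm_nonneg _)]
    _ ≤ Real.sqrt (d * ‖v‖^2) := Real.sqrt_le_sqrt key
    _ = Real.sqrt d * ‖v‖ := by
        rw [Real.sqrt_mul (by positivity), Real.sqrt_sq (norm_nonneg _)]

lemma onesingle_bound {d : ℕ} (u : Vec d) (i : Fin d) :
    ‖u - u i • onesV d‖ ≤ Real.sqrt d * ‖u‖ := by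
  have key : ‖u - u i • onesV d‖^2 ≤ d * ‖u‖^2 := by
    rw [norm_sq_vec, norm_sq_vec]
    have hexp : ∀ j, (u - u i • onesV d) j = u j - u i := by
      intro j; simp [onesV, mul_one]
    simp only [hexp]
    have hT : (∑ j ∈ Finset.univ.erase i, u j) ^ 2 ≤ (d - 1) * ∑ j ∈ Finset.univ.erase i, (u j)^2 := by
      have h0 := sq_sum_le_card_mul_sum_sq (s := Finset.univ.erase i) (f := fun j => u j)
      have hcard : (Finset.univ.erase i).card = d - 1 := by
        simp [Finset.card_erase_of_mem]
      rw [hcard] at h0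
      calc (∑ j ∈ Finset.univ.erase i, u j) ^ 2
          ≤ ((d-1:ℕ) : ℝ) * ∑ j ∈ Finset.univ.erase i, (u j)^2 := by exact_mod_cast h0
        _ = (d - 1) * ∑ j ∈ Finset.univ.erase i, (u j)^2 := by
            rw [Nat.cast_sub (Fin.pos i)]; push_cast; ring
    have e1 : ∑ j ∈ Finset.univ.erase i, u j = (∑ j, u j) - u i := by
      rw [← Finset.sum_erase_add _ _ (Finset.mem_univ i)]; ring
    have e2 : ∑ j ∈ Finset.univ.erase i, (u j)^2 = (∑ j, (u j)^2) - (u i)^2 := by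
      rw [← Finset.sum_erase_add _ (fun j => (u j)^2) (Finset.mem_univ i)]; ring
    rw [e1, e2] at hT
    have e3 : ∑ j, (u j - u i)^2 = (∑ j, (u j)^2) - 2 * u i * (∑ j, u j) + d * (u i)^2 := by
      have : ∀ j : Fin d, (u j - u i)^2 = (u j)^2 - 2 * u i * u j + (u i)^2 := fun j => by ring
      simp only [this, Finset.sum_add_distrib, Finset.sum_sub_distrib, Finset.sum_const,
        Finset.card_univ, Fintype.card_fin, nsmul_eq_mul, ← Finset.mul_sum]
    rw [e3]
    nlinarith [hT, sq_nonneg (∑ j, u j)]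
  calc ‖u - u i • onesV d‖
      = Real.sqrt (‖u - u i • onesV d‖^2) := by
        rw [Real.sqrt_sq (norm_nonneg _)]
    _ ≤ Real.sqrt (d * ‖u‖^2) := Real.sqrt_le_sqrt key
    _ = Real.sqrt d * ‖u‖ := by
        rw [Real.sqrt_mul (by positivity), Real.sqrt_sq (norm_nonneg _)]

lemma combo_bound {d : ℕ} {w : Vec d} (hw : w ∈ simplexSet d) (c : Fin d → Vec d) (M : ℝ)
    (hM : ∀ i, ‖c i‖ ≤ M) : ‖∑ i, w i • c i‖ ≤ M := by
  calc ‖∑ i, w i • c i‖ ≤ ∑ i, ‖w i • c i‖ := norm_sum_le _ _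
    _ ≤ ∑ i, w i * M := by
        apply Finset.sum_le_sum
        intro i _
        rw [norm_smul, Real.norm_eq_abs, abs_of_nonneg (hw.1 i)]
        exact mul_le_mul_of_nonneg_left (hM i) (hw.1 i)
    _ = M := by rw [← Finset.sum_mul, hw.2, one_mul]

lemma LA {d : ℕ} {w : Vec d} (hw : w ∈ simplexSet d) (v : Vec d) :
    ‖v - (∑ j, v j) • w‖ ≤ Real.sqrt d * ‖v‖ := by
  have hid : v - (∑ j, v j) • w = ∑ i, w i • (v - (∑ j, v j) • EuclideanSpace.single i (1:ℝ)) := by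
    have h1 : ∑ i, w i • (v - (∑ j, v j) • EuclideanSpace.single i (1:ℝ))
        = (∑ i, w i) • v - (∑ j, v j) • ∑ i, w i • EuclideanSpace.single i (1:ℝ) := by
      rw [Finset.sum_smul, Finset.smul_sum]
      rw [← Finset.sum_sub_distrib]
      apply Finset.sum_congr rfl
      intro i _
      rw [smul_sub, smul_comm]
    have h2 : ∑ i, w i • EuclideanSpace.single i (1:ℝ) = w := by
      ext j
      have : (∑ x, w x • EuclideanSpace.single x (1:ℝ)) j = ∑ x, (w x • EuclideanSpace.single x (1:ℝ)) j :=
        by rw [WithLp.ofLp_sum]; exact Finset.sum_apply j Finset.univ _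
      rw [this]
      simp [EuclideanSpace.single_apply]
    rw [h1, h2, hw.2, one_smul]
  rw [hid]
  exact combo_bound hw _ _ (fun i => single_bound v i)

lemma LB {d : ℕ} {w : Vec d} (hw : w ∈ simplexSet d) (u : Vec d) :
    ‖u - (∑ i, w i * u i) • onesV d‖ ≤ Real.sqrt d * ‖u‖ := by
  have hid : u - (∑ i, w i * u i) • onesV d
      = ∑ i, w i • (u - u i • onesV d) := by
    have h1 : ∑ i, w i • (u - u i • onesV d)
        = (∑ i, w i) • u - (∑ i, w i * u i) • onesV d := by
      rw [Finset.sum_smul, Finset.sum_smul]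
      rw [← Finset.sum_sub_distrib]
      apply Finset.sum_congr rfl
      intro i _
      rw [smul_sub, smul_smul]
    rw [h1, hw.2, one_smul]
  rw [hid]
  exact combo_bound hw _ _ (fun i => onesingle_bound u i)


section clipped
variable {d : ℕ} {u u' : Vec d}

lemma clipped_sum_abs (hu : u ∈ clippedSet d) : ∑ i, |u i| = ∑ i, u i :=
  Finset.sum_congr rfl (fun i _ => abs_of_nonneg (hu.1 i))

lemma clipped_sum_one_le (hu : u ∈ clippedSet d) : 1 ≤ ∑ i, |u i| := by
  rw [clipped_sum_abs hu]; exact hu.2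

lemma clipped_sum_pos (hu : u ∈ clippedSet d) : 0 < ∑ i, |u i| :=
  lt_of_lt_of_le one_pos (clipped_sum_one_le hu)

lemma normPart_mem (hu : u ∈ clippedSet d) : normPart u ∈ simplexSet d := by
  have hs := clipped_sum_pos hu
  constructor
  · intro i
    exact mul_nonneg (le_of_lt (inv_pos.mpr hs)) (hu.1 i)
  · simp only [normPart, PiLp.smul_apply, smul_eq_mul, ← Finset.mul_sum]
    rw [← clipped_sum_abs hu, inv_mul_cancel₀ (ne_of_gt hs)]

lemma norm_le_sum_abs (v : Vec d) : ‖v‖ ≤ ∑ i, |v i| := by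
  have h1 : ‖v‖^2 ≤ (∑ i, |v i|)^2 := by
    rw [norm_sq_vec]
    calc ∑ i, (v i)^2 = ∑ i, |v i|^2 := by simp [sq_abs]
      _ ≤ (∑ i, |v i|)^2 := Finset.sum_sq_le_sq_sum_of_nonneg (fun i _ => abs_nonneg _)
  nlinarith [norm_nonneg v, Finset.sum_nonneg (fun i (_ : i ∈ Finset.univ) => abs_nonneg (v i))]

lemma normPart_norm_le (hu : u ∈ clippedSet d) : ‖normPart u‖ ≤ 1 := by
  have hs := clipped_sum_pos hu
  rw [normPart, norm_smul, Real.norm_eq_abs, abs_of_pos (inv_pos.mpr hs)]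
  rw [inv_mul_le_iff₀ hs, mul_one]
  exact norm_le_sum_abs u

lemma normPart_lip (hu : u ∈ clippedSet d) (hu' : u' ∈ clippedSet d) :
    ‖normPart u - normPart u'‖ ≤ Real.sqrt d * ‖u - u'‖ := by
  have hs := clipped_sum_pos hu
  have hs' := clipped_sum_pos hu'
  set s := ∑ i, |u i| with hsdef
  set s' := ∑ i, |u' i| with hs'def
  have key : normPart u - normPart u'
      = s⁻¹ • ((u - u') - (∑ j, (u j - u' j)) • normPart u') := by
    have hss : ∑ j, (u j - u' j) = s - s' := by
      rw [Finset.sum_sub_distrib, hsdef, hs'def, clipped_sum_abs hu, clipped_sum_abs hu']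
    rw [hss]
    ext k
    simp only [normPart, PiLp.sub_apply, PiLp.smul_apply, smul_eq_mul]
    field_simp
    rw [← hsdef, ← hs'def]
    linear_combination (mul_div_cancel_right₀ (u.ofLp k) hs.ne') - (mul_div_cancel_right₀ (u'.ofLp k) hs'.ne')
  rw [key, norm_smul, Real.norm_eq_abs, abs_of_pos (inv_pos.mpr hs)]
  have h2 : ‖(u - u') - (∑ j, (u j - u' j)) • normPart u'‖ ≤ Real.sqrt d * ‖u - u'‖ := by
    have := LA (normPart_mem hu') (u - u')
    convert this using 3
    simp
  calc s⁻¹ * ‖(u - u') - (∑ j, (u j - u' j)) • normPart u'‖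
      ≤ 1 * (Real.sqrt d * ‖u - u'‖) := by
        apply mul_le_mul _ h2 (norm_nonneg _) (by norm_num)
        rw [inv_le_one_iff₀]
        right; exact clipped_sum_one_le hu
    _ = Real.sqrt d * ‖u - u'‖ := one_mul _


end clipped

section matrixops
variable {d1 d2 : ℕ} (A : Matrix (Fin d1) (Fin d2) ℝ)

def mvA (v : Vec d2) : Vec d1 := WithLp.toLp 2 (fun i => ∑ j, A i j * v j)
def mvAT (x : Vec d1) : Vec d2 := WithLp.toLp 2 (fun j => ∑ i, A i j * x i)

lemma inner_vec {d : ℕ} (x y : Vec d) : ⟪x, y⟫ = ∑ i, x i * y i := by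
  simp [PiLp.inner_apply]
  exact Finset.sum_congr rfl (fun i _ => mul_comm _ _)

lemma opNorm_nonneg : 0 ≤ opNorm A := norm_nonneg _

lemma mvA_le (v : Vec d2) : ‖mvA A v‖ ≤ opNorm A * ‖v‖ := by
  have h : mvA A v = (LinearMap.toContinuousLinearMap (Matrix.toEuclideanLin A)) v := by
    ext i
    simp [mvA, Matrix.toEuclideanLin_apply, Matrix.mulVec, dotProduct]
  rw [h]
  exact ContinuousLinearMap.le_opNorm _ v

lemma mvAT_le (x : Vec d1) : ‖mvAT A x‖ ≤ opNorm A * ‖x‖ := by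
  set n := ‖mvAT A x‖ with hn
  have hnn : 0 ≤ n := norm_nonneg _
  have hON := opNorm_nonneg A
  rcases eq_or_lt_of_le hnn with h0 | hpos
  · rw [← h0]; positivity
  have h1 : n^2 = ∑ j, mvAT A x j * mvAT A x j := by
    rw [hn, norm_sq_vec]
    exact Finset.sum_congr rfl (fun j _ => sq (mvAT A x j) ▸ by ring)
  have h2 : ∑ j, mvAT A x j * mvAT A x j = ⟪x, mvA A (mvAT A x)⟫ := by
    rw [inner_vec]
    have lhs : ∑ j, mvAT A x j * mvAT A x j = ∑ j, ∑ i, A i j * x i * mvAT A x j := by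
      apply Finset.sum_congr rfl
      intro j _
      rw [mvAT, Finset.sum_mul]
    have rhs : ∑ i, x i * mvA A (mvAT A x) i = ∑ i, ∑ j, A i j * x i * mvAT A x j := by
      apply Finset.sum_congr rfl
      intro i _
      rw [mvA, Finset.mul_sum]
      exact Finset.sum_congr rfl (fun j _ => by ring)
    rw [lhs, rhs, Finset.sum_comm]
  have h3 : ⟪x, mvA A (mvAT A x)⟫ ≤ ‖x‖ * (opNorm A * n) := by
    calc ⟪x, mvA A (mvAT A x)⟫ ≤ ‖x‖ * ‖mvA A (mvAT A x)‖ := real_inner_le_norm _ _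
      _ ≤ ‖x‖ * (opNorm A * n) := by
          exact mul_le_mul_of_nonneg_left (mvA_le A _) (norm_nonneg x)
  have h4 : n^2 ≤ ‖x‖ * (opNorm A * n) := by rw [h1, h2]; exact h3
  nlinarith [hpos]

end matrixops


section foplip
variable {d1 d2 : ℕ}

lemma norm_onesV (d : ℕ) : ‖onesV d‖ = Real.sqrt d := by
  rw [EuclideanSpace.norm_eq]
  congr 1
  simp [onesV]

lemma xPart_sub (z z' : Joint d1 d2) : xPart (z - z') = xPart z - xPart z' := rfl
lemma yPart_sub (z z' : Joint d1 d2) : yPart (z - z') = yPart z - yPart z' := rfl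

lemma joint_norm_sq (z : Joint d1 d2) : ‖z‖^2 = ‖xPart z‖^2 + ‖yPart z‖^2 := by
  rw [norm_sq_vec, norm_sq_vec]
  rw [EuclideanSpace.norm_eq, Real.sq_sqrt (by positivity)]
  rw [Fintype.sum_sum_type]
  simp [xPart, yPart, Real.norm_eq_abs, sq_abs]

lemma mvA_sub (A : Matrix (Fin d1) (Fin d2) ℝ) (v v' : Vec d2) :
    mvA A v - mvA A v' = mvA A (v - v') := by
  ext i
  simp only [mvA, PiLp.sub_apply, ← Finset.sum_sub_distrib]
  exact Finset.sum_congr rfl (fun j _ => by ring)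

lemma payoff_inner (A : Matrix (Fin d1) (Fin d2) ℝ) (x : Vec d1) (y : Vec d2) :
    payoff A x y = ⟪x, mvA A y⟫ := by
  rw [inner_vec, payoff]
  apply Finset.sum_congr rfl
  intro i _
  rw [mvA, Finset.mul_sum]
  exact Finset.sum_congr rfl (fun j _ => by ring)

set_option maxHeartbeats 1000000 in
lemma fop_lip (A : Matrix (Fin d1) (Fin d2) ℝ) {z z' : Joint d1 d2}
    (hz : z ∈ ZgeSet d1 d2) (hz' : z' ∈ ZgeSet d1 d2) :
    ‖Fop A z - Fop A z'‖ ≤ LF A * ‖z - z'‖ := by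
  set N := opNorm A with hN
  have hN0 : 0 ≤ N := opNorm_nonneg A
  set x : Vec d1 := normPart (xPart z) with hxeq
  set x' : Vec d1 := normPart (xPart z') with hxeq'
  set y : Vec d2 := normPart (yPart z) with hyeq
  set y' : Vec d2 := normPart (yPart z') with hyeq'
  have hxs : x ∈ simplexSet d1 := normPart_mem hz.1
  have hxs' : x' ∈ simplexSet d1 := normPart_mem hz'.1
  have hys : y ∈ simplexSet d2 := normPart_mem hz.2
  have hys' : y' ∈ simplexSet d2 := normPart_mem hz'.2
  set a := ‖xPart z - xPart z'‖ with hadef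
  set b := ‖yPart z - yPart z'‖ with hbdef
  have ha0 : 0 ≤ a := norm_nonneg _
  have hb0 : 0 ≤ b := norm_nonneg _
  set α := ‖x - x'‖ with hαdef
  set β := ‖y - y'‖ with hβdef
  have hα0 : 0 ≤ α := norm_nonneg _
  have hβ0 : 0 ≤ β := norm_nonneg _
  have hα : α ≤ Real.sqrt d1 * a := normPart_lip hz.1 hz'.1
  have hβ : β ≤ Real.sqrt d2 * b := normPart_lip hz.2 hz'.2
  -- payoff difference decomposition
  have hδ : payoff A x y - payoff A x' y' = ⟪x, mvA A (y - y')⟫ + ⟪x - x', mvA A y'⟫ := by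
    rw [payoff_inner, payoff_inner, ← mvA_sub, inner_sub_right, inner_sub_left]
    ring
  -- bounds on the two scalar pieces
  have hδ1 : |⟪x, mvA A (y - y')⟫| ≤ N * β := by
    calc |⟪x, mvA A (y - y')⟫| ≤ ‖x‖ * ‖mvA A (y - y')‖ := abs_real_inner_le_norm _ _
      _ ≤ 1 * (N * β) := by
          apply mul_le_mul (normPart_norm_le hz.1) (mvA_le A _) (norm_nonneg _) zero_le_one
      _ = N * β := one_mul _
  have hδ2 : |⟪x - x', mvA A y'⟫| ≤ N * α := by
    calc |⟪x - x', mvA A y'⟫| ≤ ‖x - x'‖ * ‖mvA A y'‖ := abs_real_inner_le_norm _ _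
      _ ≤ α * (N * 1) := by
          apply mul_le_mul_of_nonneg_left _ hα0
          calc ‖mvA A y'‖ ≤ N * ‖y'‖ := mvA_le A _
            _ ≤ N * 1 := mul_le_mul_of_nonneg_left (normPart_norm_le hz'.2) hN0
      _ = N * α := by ring
  -- first block
  have hfx : xPart (Fop A z - Fop A z')
      = (mvA A (y - y') - (∑ i, x i * (mvA A (y - y')) i) • onesV d1)
        - ⟪x - x', mvA A y'⟫ • onesV d1 := by
    have hδ' := hδ
    rw [inner_vec x (mvA A (y - y'))] at hδ'
    ext i
    simp only [xPart, Fop, joinPt, PiLp.sub_apply, PiLp.smul_apply, smul_eq_mul, onesV,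
      Sum.elim_inl, mul_one, ← hxeq, ← hxeq', ← hyeq, ← hyeq']
    have h1 : (mvA A (y - y')) i = (∑ j, A i j * y j) - (∑ j, A i j * y' j) := by
      rw [← mvA_sub]
      simp only [PiLp.sub_apply, mvA]
    rw [h1]
    have h2 : ∑ k, x k * mvA A (y - y') k = payoff A x y - payoff A x' y' - ⟪x - x', mvA A y'⟫ := by
      rw [hδ']; ring
    rw [h2]
    rw [show normPart (WithLp.toLp 2 fun i => z.ofLp (Sum.inl i)) = x from rfl,
      show normPart (WithLp.toLp 2 fun i => z'.ofLp (Sum.inl i)) = x' from rfl]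
    ring
  have hBx : ‖xPart (Fop A z - Fop A z')‖ ≤ Real.sqrt d1 * (N * (α + β)) := by
    rw [hfx]
    calc ‖(mvA A (y - y') - (∑ i, x i * (mvA A (y - y')) i) • onesV d1)
          - ⟪x - x', mvA A y'⟫ • onesV d1‖
        ≤ ‖mvA A (y - y') - (∑ i, x i * (mvA A (y - y')) i) • onesV d1‖
          + ‖⟪x - x', mvA A y'⟫ • onesV d1‖ := norm_sub_le _ _
      _ ≤ Real.sqrt d1 * ‖mvA A (y - y')‖ + |⟪x - x', mvA A y'⟫| * Real.sqrt d1 := by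
          apply add_le_add (LB hxs _)
          rw [norm_smul, Real.norm_eq_abs, norm_onesV]
      _ ≤ Real.sqrt d1 * (N * β) + (N * α) * Real.sqrt d1 := by
          apply add_le_add
          · exact mul_le_mul_of_nonneg_left (mvA_le A _) (Real.sqrt_nonneg _)
          · exact mul_le_mul_of_nonneg_right hδ2 (Real.sqrt_nonneg _)
      _ = Real.sqrt d1 * (N * (α + β)) := by ring
  -- second block
  have hswap : ⟪x - x', mvA A y'⟫ = ∑ j, y' j * (mvAT A (x - x')) j := by
    rw [inner_vec]
    have l1 : ∑ i, (x - x') i * mvA A y' i = ∑ i, ∑ j, A i j * (x - x') i * y' j := by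
      apply Finset.sum_congr rfl
      intro i _
      rw [mvA, Finset.mul_sum]
      exact Finset.sum_congr rfl (fun j _ => by ring)
    have l2 : ∑ j, y' j * (mvAT A (x - x')) j = ∑ j, ∑ i, A i j * (x - x') i * y' j := by
      apply Finset.sum_congr rfl
      intro j _
      rw [mvAT, Finset.mul_sum]
      exact Finset.sum_congr rfl (fun i _ => by ring)
    rw [l1, l2, Finset.sum_comm]
  have hfy : yPart (Fop A z - Fop A z')
      = (⟪x, mvA A (y - y')⟫ • onesV d2)
        - (mvAT A (x - x') - (∑ j, y' j * (mvAT A (x - x')) j) • onesV d2) := by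
    have hδ' := hδ
    rw [hswap] at hδ'
    ext j
    simp only [yPart, Fop, joinPt, PiLp.sub_apply, PiLp.smul_apply, smul_eq_mul, onesV,
      Sum.elim_inr, mul_one, ← hxeq, ← hxeq', ← hyeq, ← hyeq']
    have h1 : (mvAT A (x - x')) j = (∑ i, A i j * x i) - (∑ i, A i j * x' i) := by
      simp only [mvAT, PiLp.sub_apply, ← Finset.sum_sub_distrib]
      exact Finset.sum_congr rfl (fun i _ => by ring)
    rw [h1]
    have h2 : ∑ k, y' k * mvAT A (x - x') k
        = payoff A x y - payoff A x' y' - ⟪x, mvA A (y - y')⟫ := by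
      rw [hδ']; ring
    rw [h2]
    rw [show normPart (WithLp.toLp 2 fun j => z.ofLp (Sum.inr j)) = y from rfl,
      show normPart (WithLp.toLp 2 fun j => z'.ofLp (Sum.inr j)) = y' from rfl]
    ring
  have hBy : ‖yPart (Fop A z - Fop A z')‖ ≤ Real.sqrt d2 * (N * (α + β)) := by
    rw [hfy]
    calc ‖(⟪x, mvA A (y - y')⟫ • onesV d2)
          - (mvAT A (x - x') - (∑ j, y' j * (mvAT A (x - x')) j) • onesV d2)‖
        ≤ ‖⟪x, mvA A (y - y')⟫ • onesV d2‖
          + ‖mvAT A (x - x') - (∑ j, y' j * (mvAT A (x - x')) j) • onesV d2‖ := norm_sub_le _ _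
      _ ≤ |⟪x, mvA A (y - y')⟫| * Real.sqrt d2 + Real.sqrt d2 * ‖mvAT A (x - x')‖ := by
          apply add_le_add _ (LB hys' _)
          rw [norm_smul, Real.norm_eq_abs, norm_onesV]
      _ ≤ (N * β) * Real.sqrt d2 + Real.sqrt d2 * (N * α) := by
          apply add_le_add
          · exact mul_le_mul_of_nonneg_right hδ1 (Real.sqrt_nonneg _)
          · exact mul_le_mul_of_nonneg_left (mvAT_le A _) (Real.sqrt_nonneg _)
      _ = Real.sqrt d2 * (N * (α + β)) := by ring
  -- combine
  set m : ℝ := max (d1 : ℝ) (d2 : ℝ) with hm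
  have hm0 : 0 ≤ m := le_trans (Nat.cast_nonneg d1) (le_max_left _ _)
  have hd1m : (d1 : ℝ) ≤ m := le_max_left _ _
  have hd2m : (d2 : ℝ) ≤ m := le_max_right _ _
  have habα : α + β ≤ Real.sqrt m * (a + b) := by
    calc α + β ≤ Real.sqrt d1 * a + Real.sqrt d2 * b := add_le_add hα hβ
      _ ≤ Real.sqrt m * a + Real.sqrt m * b := by
          apply add_le_add
          · exact mul_le_mul_of_nonneg_right (Real.sqrt_le_sqrt hd1m) ha0
          · exact mul_le_mul_of_nonneg_right (Real.sqrt_le_sqrt hd2m) hb0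
      _ = Real.sqrt m * (a + b) := by ring
  have hzz : ‖z - z'‖^2 = a^2 + b^2 := by
    rw [joint_norm_sq, xPart_sub, yPart_sub]
  have hsq : ‖Fop A z - Fop A z'‖^2 ≤ (2 * m * N * ‖z - z'‖)^2 := by
    rw [joint_norm_sq]
    have e1 : ‖xPart (Fop A z - Fop A z')‖^2 ≤ (Real.sqrt d1 * (N * (α + β)))^2 :=
      pow_le_pow_left₀ (norm_nonneg _) hBx 2
    have e2 : ‖yPart (Fop A z - Fop A z')‖^2 ≤ (Real.sqrt d2 * (N * (α + β)))^2 :=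
      pow_le_pow_left₀ (norm_nonneg _) hBy 2
    have e3 : (Real.sqrt d1 * (N * (α + β)))^2 + (Real.sqrt d2 * (N * (α + β)))^2
        = ((d1:ℝ) + d2) * (N^2 * (α + β)^2) := by
      simp only [mul_pow, Real.sq_sqrt (Nat.cast_nonneg d1), Real.sq_sqrt (Nat.cast_nonneg d2)]
      ring
    have h5 : (α + β)^2 ≤ m * (a + b)^2 := by
      calc (α + β)^2 ≤ (Real.sqrt m * (a + b))^2 :=
            pow_le_pow_left₀ (add_nonneg hα0 hβ0) habα 2
        _ = m * (a + b)^2 := by rw [mul_pow, Real.sq_sqrt hm0]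
    have e4 : ((d1:ℝ) + d2) * (N^2 * (α + β)^2) ≤ (2*m) * (N^2 * (m * (a+b)^2)) := by
      apply mul_le_mul (by linarith) _ (by positivity) (by linarith)
      exact mul_le_mul_of_nonneg_left h5 (sq_nonneg N)
    have e5 : (2*m) * (N^2 * (m * (a+b)^2)) ≤ (2 * m * N * ‖z - z'‖)^2 := by
      have h9 : (2 * m * N * ‖z - z'‖)^2 = 4 * (m^2) * (N^2) * (a^2+b^2) := by
        rw [mul_pow, mul_pow, mul_pow, hzz]; ring
      rw [h9]
      nlinarith [mul_nonneg (mul_nonneg (sq_nonneg m) (sq_nonneg N)) (sq_nonneg (a-b))]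
    linarith
  have hfinal : ‖Fop A z - Fop A z'‖ ≤ 2 * m * N * ‖z - z'‖ := by
    have h2 : (0:ℝ) ≤ 2 * m * N * ‖z - z'‖ := by positivity
    nlinarith [norm_nonneg (Fop A z - Fop A z')]
  calc ‖Fop A z - Fop A z'‖ ≤ 2 * m * N * ‖z - z'‖ := hfinal
    _ ≤ LF A * ‖z - z'‖ := by
        apply mul_le_mul_of_nonneg_right _ (norm_nonneg _)
        rw [LF]
        have h26 : (2:ℝ) ≤ Real.sqrt 6 := by
          nlinarith [Real.sq_sqrt (by norm_num : (0:ℝ) ≤ 6), Real.sqrt_nonneg 6]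
        calc 2 * m * N = 2 * N * m := by ring
          _ ≤ Real.sqrt 6 * N * m := by
              apply mul_le_mul_of_nonneg_right _ hm0
              exact mul_le_mul_of_nonneg_right h26 hN0
          _ = Real.sqrt 6 * opNorm A * max (d1:ℝ) (d2:ℝ) := by rw [hN, hm]

end foplip


section projsec
variable {E : Type*} [NormedAddCommGroup E] [InnerProductSpace ℝ E] [CompleteSpace E]

lemma projOn_spec {S : Set E} (hne : S.Nonempty) (hc : IsClosed S) (hconv : Convex ℝ S)
    (u : E) :
    projOn S u ∈ S ∧ ∀ q ∈ S, ⟪u - projOn S u, q - projOn S u⟫ ≤ 0 := by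
  have hbdd : BddBelow (Set.range (fun w : S => ‖u - (w : E)‖)) := by
    refine ⟨0, ?_⟩
    rintro r ⟨w, rfl⟩
    exact norm_nonneg _
  have hex : ∃ p ∈ S, ∀ q ∈ S, ‖u - p‖ ≤ ‖u - q‖ := by
    obtain ⟨v, hv, hveq⟩ := exists_norm_eq_iInf_of_complete_convex hne hc.isComplete hconv u
    refine ⟨v, hv, fun q hq => ?_⟩
    rw [hveq]
    exact ciInf_le hbdd ⟨q, hq⟩
  rw [projOn, dif_pos hex]
  obtain ⟨hmem, hmin⟩ := hex.choose_spec
  refine ⟨hmem, ?_⟩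
  have : Nonempty S := hne.to_subtype
  have heq : ‖u - hex.choose‖ = ⨅ w : S, ‖u - (w : E)‖ :=
    le_antisymm (le_ciInf (fun w => hmin w w.2)) (ciInf_le hbdd ⟨_, hmem⟩)
  exact (norm_eq_iInf_iff_real_inner_le_zero hconv hmem).mp heq

lemma projOn_nonexpansive {S : Set E} (hne : S.Nonempty) (hc : IsClosed S) (hconv : Convex ℝ S)
    (u v : E) : ‖projOn S u - projOn S v‖ ≤ ‖u - v‖ := by
  obtain ⟨hu_mem, hu_vi⟩ := projOn_spec hne hc hconv u
  obtain ⟨hv_mem, hv_vi⟩ := projOn_spec hne hc hconv v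
  set pu := projOn S u
  set pv := projOn S v
  have h1 : ⟪u - pu, pv - pu⟫ ≤ 0 := hu_vi pv hv_mem
  have h2 : ⟪v - pv, pu - pv⟫ ≤ 0 := hv_vi pu hu_mem
  have h1' : ⟪pu - u, pu - pv⟫ ≤ 0 := by
    rw [show pu - u = -(u - pu) by abel, show pu - pv = -(pv - pu) by abel, inner_neg_neg]
    exact h1
  have split : ⟪pu - pv, pu - pv⟫ = ⟪pu - u, pu - pv⟫ + ⟪u - v, pu - pv⟫ + ⟪v - pv, pu - pv⟫ := by
    rw [← inner_add_left, ← inner_add_left]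
    congr 1
    abel
  have key : ‖pu - pv‖^2 ≤ ‖u - v‖ * ‖pu - pv‖ := by
    rw [← real_inner_self_eq_norm_sq]
    calc ⟪pu - pv, pu - pv⟫ = ⟪pu - u, pu - pv⟫ + ⟪u - v, pu - pv⟫ + ⟪v - pv, pu - pv⟫ := split
      _ ≤ ⟪u - v, pu - pv⟫ := by linarith
      _ ≤ ‖u - v‖ * ‖pu - pv‖ := real_inner_le_norm _ _
  nlinarith [norm_nonneg (pu - pv), norm_nonneg (u - v)]

end projsec

section zge
variable {d1 d2 : ℕ}

lemma ZgeSet_nonempty (hd1 : 1 ≤ d1) (hd2 : 1 ≤ d2) : (ZgeSet d1 d2).Nonempty := by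
  refine ⟨joinPt (onesV d1) (onesV d2), ⟨⟨fun i => ?_, ?_⟩, ⟨fun j => ?_, ?_⟩⟩⟩
  · exact zero_le_one
  · simp only [xPart, joinPt, Sum.elim_inl, onesV, Finset.sum_const, Finset.card_univ,
      Fintype.card_fin, nsmul_eq_mul, mul_one]
    exact_mod_cast hd1
  · exact zero_le_one
  · simp only [yPart, joinPt, Sum.elim_inr, onesV, Finset.sum_const, Finset.card_univ,
      Fintype.card_fin, nsmul_eq_mul, mul_one]
    exact_mod_cast hd2

lemma ZgeSet_convex : Convex ℝ (ZgeSet d1 d2) := by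
  rintro z hz z' hz' s t hs ht hst
  have hsum1 : ∑ i, (s • z + t • z') (Sum.inl i) = s * (∑ i, z (Sum.inl i)) + t * (∑ i, z' (Sum.inl i)) := by
    simp only [PiLp.add_apply, PiLp.smul_apply, smul_eq_mul, Finset.sum_add_distrib, Finset.mul_sum]
  have hsum2 : ∑ j, (s • z + t • z') (Sum.inr j) = s * (∑ j, z (Sum.inr j)) + t * (∑ j, z' (Sum.inr j)) := by
    simp only [PiLp.add_apply, PiLp.smul_apply, smul_eq_mul, Finset.sum_add_distrib, Finset.mul_sum]
  refine ⟨⟨fun i => ?_, ?_⟩, ⟨fun j => ?_, ?_⟩⟩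
  · have := hz.1.1 i
    have := hz'.1.1 i
    simp only [xPart] at *
    simp only [PiLp.add_apply, PiLp.smul_apply, smul_eq_mul]
    positivity
  · show (1:ℝ) ≤ ∑ i, (s • z + t • z') (Sum.inl i)
    rw [hsum1]
    have h1 : (1:ℝ) ≤ ∑ i, z (Sum.inl i) := hz.1.2
    have h2 : (1:ℝ) ≤ ∑ i, z' (Sum.inl i) := hz'.1.2
    nlinarith
  · have := hz.2.1 j
    have := hz'.2.1 j
    simp only [yPart] at *
    simp only [PiLp.add_apply, PiLp.smul_apply, smul_eq_mul]
    positivity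
  · show (1:ℝ) ≤ ∑ j, (s • z + t • z') (Sum.inr j)
    rw [hsum2]
    have h1 : (1:ℝ) ≤ ∑ j, z (Sum.inr j) := hz.2.2
    have h2 : (1:ℝ) ≤ ∑ j, z' (Sum.inr j) := hz'.2.2
    nlinarith

lemma ZgeSet_closed : IsClosed (ZgeSet d1 d2) := by
  have heq : ZgeSet d1 d2 = (⋂ (s : Fin d1 ⊕ Fin d2), {z : Joint d1 d2 | 0 ≤ z s})
      ∩ ({z : Joint d1 d2 | 1 ≤ ∑ i, z (Sum.inl i)} ∩ {z : Joint d1 d2 | 1 ≤ ∑ j, z (Sum.inr j)}) := by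
    ext z
    simp only [ZgeSet, clippedSet, xPart, yPart, Set.mem_setOf_eq, Set.mem_inter_iff,
      Set.mem_iInter, Sum.forall]
    tauto
  rw [heq]
  apply IsClosed.inter
  · exact isClosed_iInter (fun s => isClosed_le continuous_const (EuclideanSpace.proj s).continuous)
  · apply IsClosed.inter
    · exact isClosed_le continuous_const
        (continuous_finset_sum _ (fun i _ => (EuclideanSpace.proj (Sum.inl i)).continuous))
    · exact isClosed_le continuous_const
        (continuous_finset_sum _ (fun j _ => (EuclideanSpace.proj (Sum.inr j)).continuous))

lemma Zset_subset_ZgeSet : Zset d1 d2 ⊆ ZgeSet d1 d2 := by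
  rintro z ⟨⟨hx1, hx2⟩, ⟨hy1, hy2⟩⟩
  exact ⟨⟨hx1, hx2.ge⟩, ⟨hy1, hy2.ge⟩⟩

end zge


section mainstep
variable {d1 d2 : ℕ}

lemma LF_nonneg (A : Matrix (Fin d1) (Fin d2) ℝ) : 0 ≤ LF A := by
  rw [LF]
  have h1 : (0:ℝ) ≤ Real.sqrt 6 := Real.sqrt_nonneg _
  have h2 : (0:ℝ) ≤ opNorm A := opNorm_nonneg A
  have h3 : (0:ℝ) ≤ max (d1:ℝ) (d2:ℝ) := le_trans (Nat.cast_nonneg d1) (le_max_left _ _)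
  positivity

set_option maxHeartbeats 2000000 in
lemma sprm_step (hd1 : 1 ≤ d1) (hd2 : 1 ≤ d2) (A : Matrix (Fin d1) (Fin d2) ℝ) {η : ℝ}
    (hη0 : 0 < η) (hηL : η * LF A ≤ 1/8)
    {P P' Q Q' zs : Joint d1 d2}
    (hQ'mem : Q' ∈ ZgeSet d1 d2) (hPmem : P ∈ ZgeSet d1 d2) (hzs : zs ∈ ZgeSet d1 d2)
    (hMinty : ∀ u ∈ ZgeSet d1 d2, 0 ≤ ⟪Fop A u, u - zs⟫)
    (hP' : P' = projOn (ZgeSet d1 d2) (P - η • Fop A Q))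
    (hQ : Q = projOn (ZgeSet d1 d2) (P - η • Fop A Q')) :
    ‖P' - zs‖^2 ≤ ‖P - zs‖^2 + (1/16)*‖P - Q'‖^2 - ‖P' - Q‖^2 - (15/16)*‖P - Q‖^2 := by
  have hne := ZgeSet_nonempty hd1 hd2
  have hcl := ZgeSet_closed (d1 := d1) (d2 := d2)
  have hcv := ZgeSet_convex (d1 := d1) (d2 := d2)
  set L := LF A with hLdef
  have hL0 : 0 ≤ L := LF_nonneg A
  obtain ⟨hP'mem, hP'vi⟩ := projOn_spec hne hcl hcv (P - η • Fop A Q)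
  rw [← hP'] at hP'mem hP'vi
  obtain ⟨hQmem, hQvi⟩ := projOn_spec hne hcl hcv (P - η • Fop A Q')
  rw [← hQ] at hQmem hQvi
  -- scalar abbreviations
  have hLip : ‖Fop A Q - Fop A Q'‖ ≤ L * ‖Q - Q'‖ := fop_lip A hQmem hQ'mem
  have hnonexp : ‖P' - Q‖ ≤ η * ‖Fop A Q - Fop A Q'‖ := by
    have hne0 := projOn_nonexpansive hne hcl hcv (P - η • Fop A Q) (P - η • Fop A Q')
    rw [← hP', ← hQ] at hne0
    calc ‖P' - Q‖ ≤ ‖(P - η • Fop A Q) - (P - η • Fop A Q')‖ := hne0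
      _ = ‖η • (Fop A Q' - Fop A Q)‖ := by congr 1; rw [smul_sub]; abel
      _ = η * ‖Fop A Q' - Fop A Q‖ := by
          rw [norm_smul, Real.norm_eq_abs, abs_of_pos hη0]
      _ = η * ‖Fop A Q - Fop A Q'‖ := by rw [norm_sub_rev]
  have hP'Qle : ‖P' - Q‖ ≤ (1/8) * ‖Q - Q'‖ := by
    calc ‖P' - Q‖ ≤ η * ‖Fop A Q - Fop A Q'‖ := hnonexp
      _ ≤ η * (L * ‖Q - Q'‖) := mul_le_mul_of_nonneg_left hLip hη0.le
      _ = (η * L) * ‖Q - Q'‖ := by ring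
      _ ≤ (1/8) * ‖Q - Q'‖ := mul_le_mul_of_nonneg_right hηL (norm_nonneg _)
  -- variational inequalities in scalar form
  have hVI1 : ⟪P - P', zs - P'⟫ ≤ η * ⟪Fop A Q, zs - P'⟫ := by
    have h := hP'vi zs hzs
    rw [show (P - η • Fop A Q) - P' = (P - P') - η • Fop A Q by abel] at h
    rw [inner_sub_left, real_inner_smul_left] at h
    linarith
  have hVI2 : ⟪P - Q, P' - Q⟫ ≤ η * ⟪Fop A Q', P' - Q⟫ := by
    have h := hQvi P' hP'mem
    rw [show (P - η • Fop A Q') - Q = (P - Q) - η • Fop A Q' by abel] at h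
    rw [inner_sub_left, real_inner_smul_left] at h
    linarith
  -- decompositions
  have hdec1 : ⟪Fop A Q, zs - P'⟫ = ⟪Fop A Q, zs - Q⟫ + ⟪Fop A Q, Q - P'⟫ := by
    rw [← inner_add_right]
    congr 1
    abel
  have hdec2 : ⟪Fop A Q, Q - P'⟫ = ⟪Fop A Q', Q - P'⟫ + ⟪Fop A Q - Fop A Q', Q - P'⟫ := by
    rw [inner_sub_left]
    ring
  have hU : ⟪Fop A Q, zs - Q⟫ ≤ 0 := by
    have := hMinty Q hQmem
    rw [show zs - Q = -(Q - zs) by abel, inner_neg_right]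
    linarith
  have hV1 : ⟪Fop A Q', Q - P'⟫ = -⟪Fop A Q', P' - Q⟫ := by
    rw [show Q - P' = -(P' - Q) by abel, inner_neg_right]
  have hV2 : ⟪Fop A Q - Fop A Q', Q - P'⟫ ≤ (L * ‖Q - Q'‖) * ‖P' - Q‖ := by
    calc ⟪Fop A Q - Fop A Q', Q - P'⟫ ≤ ‖Fop A Q - Fop A Q'‖ * ‖Q - P'‖ := real_inner_le_norm _ _
      _ = ‖Fop A Q - Fop A Q'‖ * ‖P' - Q‖ := by rw [norm_sub_rev Q P']
      _ ≤ (L * ‖Q - Q'‖) * ‖P' - Q‖ := mul_le_mul_of_nonneg_right hLip (norm_nonneg _)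
  -- norm identities
  have idA : ‖P - zs‖^2 = ‖P - P'‖^2 - 2*⟪P - P', zs - P'⟫ + ‖zs - P'‖^2 := by
    have h := norm_sub_sq_real (P - P') (zs - P')
    rw [show (P - P') - (zs - P') = P - zs by abel] at h
    exact h
  have idB : ‖P - P'‖^2 = ‖P - Q‖^2 - 2*⟪P - Q, P' - Q⟫ + ‖P' - Q‖^2 := by
    have h := norm_sub_sq_real (P - Q) (P' - Q)
    rw [show (P - Q) - (P' - Q) = P - P' by abel] at h
    exact h
  have hnrev : ‖zs - P'‖ = ‖P' - zs‖ := norm_sub_rev _ _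
  -- quantitative error bound
  have hQQ' : ‖Q - Q'‖ ≤ ‖P - Q‖ + ‖P - Q'‖ := by
    calc ‖Q - Q'‖ = ‖(Q - P) + (P - Q')‖ := by congr 1; abel
      _ ≤ ‖Q - P‖ + ‖P - Q'‖ := norm_add_le _ _
      _ = ‖P - Q‖ + ‖P - Q'‖ := by rw [norm_sub_rev]
  have herr : 2 * η * ⟪Fop A Q - Fop A Q', Q - P'⟫ ≤ (1/16) * (‖P - Q‖^2 + ‖P - Q'‖^2) := by
    have s1 : 2 * η * ⟪Fop A Q - Fop A Q', Q - P'⟫ ≤ 2 * η * ((L * ‖Q - Q'‖) * ‖P' - Q‖) := by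
      apply mul_le_mul_of_nonneg_left hV2 (by linarith)
    have s2 : 2 * η * ((L * ‖Q - Q'‖) * ‖P' - Q‖) = 2 * (η * L) * (‖Q - Q'‖ * ‖P' - Q‖) := by ring
    have s3 : 2 * (η * L) * (‖Q - Q'‖ * ‖P' - Q‖) ≤ 2 * (1/8) * (‖Q - Q'‖ * ‖P' - Q‖) := by
      apply mul_le_mul_of_nonneg_right (by linarith) (mul_nonneg (norm_nonneg _) (norm_nonneg _))
    have s4 : ‖Q - Q'‖ * ‖P' - Q‖ ≤ ‖Q - Q'‖ * ((1/8) * ‖Q - Q'‖) :=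
      mul_le_mul_of_nonneg_left hP'Qle (norm_nonneg _)
    have s5 : ‖Q - Q'‖^2 ≤ (‖P - Q‖ + ‖P - Q'‖)^2 :=
      pow_le_pow_left₀ (norm_nonneg _) hQQ' 2
    have s6 : (‖P - Q‖ + ‖P - Q'‖)^2 ≤ 2*‖P - Q‖^2 + 2*‖P - Q'‖^2 := by
      nlinarith [sq_nonneg (‖P - Q‖ - ‖P - Q'‖)]
    nlinarith [s1, s2, s3, s4, s5, s6]
  -- final assembly
  have final1 : ‖P' - zs‖^2 ≤ ‖P - zs‖^2 - ‖P - P'‖^2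
      + 2*η*⟪Fop A Q, Q - P'⟫ := by
    have e1 : ‖P' - zs‖^2 = ‖P - zs‖^2 - ‖P - P'‖^2 + 2*⟪P - P', zs - P'⟫ := by
      rw [idA, hnrev]; ring
    have e2 : ⟪P - P', zs - P'⟫ ≤ η * (⟪Fop A Q, zs - Q⟫ + ⟪Fop A Q, Q - P'⟫) := by
      rw [← hdec1]; exact hVI1
    have e3 : η * ⟪Fop A Q, zs - Q⟫ ≤ 0 := mul_nonpos_of_nonneg_of_nonpos hη0.le hU
    nlinarith [e1, e2, e3]
  have final2 : 2*η*⟪Fop A Q', Q - P'⟫ ≤ ‖P - P'‖^2 - ‖P - Q‖^2 - ‖P' - Q‖^2 := by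
    rw [hV1]
    have := hVI2
    nlinarith [idB]
  have final3 : 2*η*⟪Fop A Q, Q - P'⟫
      = 2*η*⟪Fop A Q', Q - P'⟫ + 2*η*⟪Fop A Q - Fop A Q', Q - P'⟫ := by
    rw [hdec2]; ring
  linarith [final1, final2, final3, herr]

end mainstep

/-- Descent inequality for SPRM⁺ towards any point z* satisfying the Minty
condition, and the resulting stability bounds. -/
theorem sprmp_distance_decreasing {d1 d2 : ℕ} (hd1 : 1 ≤ d1) (hd2 : 1 ≤ d2)
    (A : Matrix (Fin d1) (Fin d2) ℝ) (η : ℝ) (hη0 : 0 < η) (hη1 : η ≤ 1 / (8 * LF A))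
    (w z : ℕ → Joint d1 d2) (hS : SPRM A η w z)
    (zs : Joint d1 d2) (hzs : zs ∈ ZgeSet d1 d2)
    (hMinty : ∀ u ∈ ZgeSet d1 d2, 0 ≤ ⟪Fop A u, u - zs⟫) :
    (∀ t : ℕ, ‖w (t + 1) - zs‖ ^ 2 + (1 / 16) * ‖w (t + 1) - z t‖ ^ 2 ≤
      ‖w t - zs‖ ^ 2 + (1 / 16) * ‖w t - zPrev w z t‖ ^ 2 -
        (15 / 16) * (‖w (t + 1) - z t‖ ^ 2 + ‖w t - z t‖ ^ 2)) ∧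
    (∀ t : ℕ, ‖w (t + 1) - z t‖ + ‖w t - z t‖ ≤ 2 * ‖w 0 - zs‖) ∧
    (∀ t : ℕ, ‖w t - z t‖ + ‖w t - zPrev w z t‖ ≤ 2 * ‖w 0 - zs‖) := by
  obtain ⟨hw0, hz0, hziter, hwiter⟩ := hS
  have hLnn : 0 ≤ LF A := LF_nonneg A
  have hηL : η * LF A ≤ 1/8 := by
    rcases eq_or_lt_of_le hLnn with h0 | hpos
    · exfalso
      rw [← h0] at hη1
      norm_num at hη1
      linarith
    · rw [le_div_iff₀ (by positivity)] at hη1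
      nlinarith
  have hne := ZgeSet_nonempty hd1 hd2
  have hcl := ZgeSet_closed (d1 := d1) (d2 := d2)
  have hcv := ZgeSet_convex (d1 := d1) (d2 := d2)
  have hw0ge : w 0 ∈ ZgeSet d1 d2 := Zset_subset_ZgeSet hw0
  have hwmem : ∀ t, w t ∈ ZgeSet d1 d2 := by
    intro t
    cases t with
    | zero => exact hw0ge
    | succ s =>
        rw [hwiter s]
        exact (projOn_spec hne hcl hcv _).1
  have hzmem : ∀ t, z t ∈ ZgeSet d1 d2 := by
    intro t
    cases t with
    | zero =>
        rw [hz0]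
        exact (projOn_spec hne hcl hcv _).1
    | succ s =>
        rw [hziter s]
        exact (projOn_spec hne hcl hcv _).1
  have hzprevmem : ∀ t, zPrev w z t ∈ ZgeSet d1 d2 := by
    intro t
    cases t with
    | zero => simpa [zPrev] using hw0ge
    | succ s => simpa [zPrev] using hzmem s
  have hzprevsucc : ∀ t, zPrev w z (t+1) = z t := by
    intro t
    simp [zPrev]
  have hQeq : ∀ t, z t = projOn (ZgeSet d1 d2) (w t - η • Fop A (zPrev w z t)) := by
    intro t
    cases t with
    | zero => simpa [zPrev] using hz0
    | succ s =>
        rw [hzprevsucc s]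
        exact hziter s
  have main : ∀ t : ℕ, ‖w (t + 1) - zs‖ ^ 2 + 1 / 16 * ‖w (t + 1) - z t‖ ^ 2 ≤
      ‖w t - zs‖ ^ 2 + 1 / 16 * ‖w t - zPrev w z t‖ ^ 2 -
        15 / 16 * (‖w (t + 1) - z t‖ ^ 2 + ‖w t - z t‖ ^ 2) := by
    intro t
    have h := sprm_step hd1 hd2 A hη0 hηL (hzprevmem t) (hwmem t) hzs hMinty
      (hwiter t) (hQeq t)
    linarith
  have hmono : ∀ t : ℕ, ‖w t - zs‖ ^ 2 + 1 / 16 * ‖w t - zPrev w z t‖ ^ 2 ≤ ‖w 0 - zs‖ ^ 2 := by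
    intro t
    induction t with
    | zero =>
        have h0 : zPrev w z 0 = w 0 := by simp [zPrev]
        rw [h0, sub_self, norm_zero]
        norm_num
    | succ s ih =>
        have h := main s
        rw [hzprevsucc s]
        have hnn1 : (0:ℝ) ≤ ‖w (s+1) - z s‖ ^ 2 := sq_nonneg _
        have hnn2 : (0:ℝ) ≤ ‖w s - z s‖ ^ 2 := sq_nonneg _
        linarith
  have hD0 : (0:ℝ) ≤ ‖w 0 - zs‖ := norm_nonneg _
  have hkey : ∀ t : ℕ, (15/16) * (‖w (t+1) - z t‖^2 + ‖w t - z t‖^2) ≤ ‖w 0 - zs‖^2 := by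
    intro t
    have h1 := main t
    have h2 := hmono t
    have h3 : (0:ℝ) ≤ ‖w (t+1) - zs‖ ^ 2 := sq_nonneg _
    have h4 : (0:ℝ) ≤ ‖w (t+1) - z t‖ ^ 2 := sq_nonneg _
    linarith
  refine ⟨main, ?_, ?_⟩
  · intro t
    have h := hkey t
    have hB := norm_nonneg (w (t+1) - z t)
    have hA := norm_nonneg (w t - z t)
    nlinarith [sq_nonneg (‖w (t+1) - z t‖ - ‖w t - z t‖), hD0, h, hB, hA]
  · intro t
    cases t with
    | zero =>
        have hz00 : zPrev w z 0 = w 0 := by simp [zPrev]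
        rw [hz00, sub_self, norm_zero, add_zero]
        have h := hkey 0
        have hA := norm_nonneg (w 0 - z 0)
        have h4 : (0:ℝ) ≤ ‖w 1 - z 0‖ ^ 2 := sq_nonneg _
        nlinarith [h, hA, hD0, h4]
    | succ s =>
        rw [hzprevsucc s]
        have h1 := main s
        have h3 := hmono s
        have hc := norm_nonneg (w (s+1) - z s)
        have ha := norm_nonneg (w (s+1) - z (s+1))
        have h6 : (0:ℝ) ≤ ‖w s - z s‖ ^ 2 := sq_nonneg _
        have h7 : (0:ℝ) ≤ ‖w (s+2) - z (s+1)‖ ^ 2 := sq_nonneg _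
        have h8 : (0:ℝ) ≤ ‖w (s+1) - zs‖ ^ 2 := sq_nonneg _
        have key2 : (15/16) * (‖w (s+1) - z (s+1)‖^2 + ‖w (s+1) - z s‖^2) ≤ ‖w 0 - zs‖^2 := by
          have h2' := main (s+1)
          rw [hzprevsucc s] at h2'
          have h5 : (0:ℝ) ≤ ‖w (s+2) - zs‖ ^ 2 := sq_nonneg _
          linarith
        nlinarith [key2, hc, ha, hD0,
          sq_nonneg (‖w (s+1) - z (s+1)‖ - ‖w (s+1) - z s‖)]


end
end
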